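/- (Laurent expansion, left version.) Let ζ₀ ∈ E₃, ξ₁₀ = f₁(ζ₀), ξ₂₀ = f₂(ζ₀), and 0 ≤ r < R ≤ ∞. Let F̂₁, F̂₄ be holomorphic on the annulus {ξ ∈ ℂ : r < |ξ − ξ₁₀| < R} with Laurent expansions F̂₁(ξ) = ∑_{n∈ℤ} âₙ(ξ − ξ₁₀)ⁿ, F̂₄(ξ) = ∑_{n∈ℤ} d̂ₙ(ξ − ξ₁₀)ⁿ, and F̂₂, F̂₃ holomorphic on {ξ ∈ ℂ : r < |ξ − ξ₂₀| < R} with Laurent expansions F̂₂(ξ) = ∑_{n∈ℤ} b̂ₙ(ξ − ξ₂₀)ⁿ, F̂₃(ξ) = ∑_{n∈ℤ} ĉₙ(ξ − ξ₂₀)ⁿ. Define Φ̂ on K_ζ = {ζ ∈ E₃ : r < |f₁(ζ) − ξ₁₀| < R, r < |f₂(ζ) − ξ₂₀| < R} by Φ̂(ζ) = F̂₁(ξ₁)e₁ + F̂₂(ξ₂)e₂ + F̂₃(ξ₂)e₃ + F̂₄(ξ₁)e₄ with ξ₁ = f₁(ζ), ξ₂ = f₂(ζ). Then for every ζ ∈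 K_ζ the two-sided series ∑_{n∈ℤ} p̂ₙ (ζ − ζ₀)ⁿ, with p̂ₙ = âₙe₁ + b̂ₙe₂ + ĉₙe₃ + d̂ₙe₄ and (ζ − ζ₀)ⁿ := ((ζ − ζ₀)⁻¹)^(−n) for negative n, converges absolutely in the norm of ℍ(ℂ) and its sum equals Φ̂(ζ). -/

import Mathlib

noncomputable section

/-- The algebra of complex quaternions ℍ(ℂ): quaternions over ℂ with
I² = J² = K² = -1, IJ = -JI = K, JK = -KJ = I, KI = -IK = J. -/
abbrev HC : Type := Quaternion ℂ

/-- The quaternion unit I. -/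
def Iq : HC := ⟨0, 1, 0, 0⟩
/-- The quaternion unit J. -/
def Jq : HC := ⟨0, 0, 1, 0⟩
/-- The quaternion unit K. -/
def Kq : HC := ⟨0, 0, 0, 1⟩

/-- e₁ = (1 + iI)/2. -/
def e1 : HC := (2 : ℂ)⁻¹ • (1 + Complex.I • Iq)
/-- e₂ = (1 - iI)/2. -/
def e2 : HC := (2 : ℂ)⁻¹ • (1 - Complex.I • Iq)
/-- e₃ = (iJ - K)/2. -/
def e3 : HC := (2 : ℂ)⁻¹ • (Complex.I • Jq - Kq)
/-- e₄ = (iJ + K)/2. -/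
def e4 : HC := (2 : ℂ)⁻¹ • (Complex.I • Jq + Kq)

/-- The coefficient c₁ of q in the basis {e₁,e₂,e₃,e₄} (q = c₁e₁ + c₂e₂ + c₃e₃ + c₄e₄). -/
def coord1 (q : HC) : ℂ := q.re - Complex.I * q.imI
/-- The coefficient c₂ of q in the basis {e₁,e₂,e₃,e₄}. -/
def coord2 (q : HC) : ℂ := q.re + Complex.I * q.imI
/-- The coefficient c₃ of q in the basis {e₁,e₂,e₃,e₄}. -/
def coord3 (q : HC) : ℂ := -(Complex.I * q.imJ) - q.imK
/-- The coefficient c₄ of q in the basis {e₁,e₂,e₃,e₄}. -/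
def coord4 (q : HC) : ℂ := -(Complex.I * q.imJ) + q.imK

/-- The norm ‖c‖ = √(|c₁|² + |c₂|² + |c₃|² + |c₄|²) of c = c₁e₁ + c₂e₂ + c₃e₃ + c₄e₄. -/
def hnorm (q : HC) : ℝ :=
  Real.sqrt (‖coord1 q‖ ^ 2 + ‖coord2 q‖ ^ 2 +
    ‖coord3 q‖ ^ 2 + ‖coord4 q‖ ^ 2)

/-- i₂ = a₁e₁ + a₂e₂. -/
def i2 (a₁ a₂ : ℂ) : HC := a₁ • e1 + a₂ • e2
/-- i₃ = b₁e₁ + b₂e₂. -/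
def i3 (b₁ b₂ : ℂ) : HC := b₁ • e1 + b₂ • e2

/-- ζ = x·i₁ + y·i₂ + z·i₃ with i₁ = 1. -/
def zeta (a₁ a₂ b₁ b₂ : ℂ) (x y z : ℝ) : HC :=
  (x : ℂ) • (1 : HC) + (y : ℂ) • i2 a₁ a₂ + (z : ℂ) • i3 b₁ b₂

/-- E₃ = {x i₁ + y i₂ + z i₃ : x, y, z ∈ ℝ}. -/
def E3 (a₁ a₂ b₁ b₂ : ℂ) : Set HC :=
  {q | ∃ x y z : ℝ, q = zeta a₁ a₂ b₁ b₂ x y z}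

/-- ξ₁ = f₁(ζ) = x + y a₁ + z b₁. -/
def xi1 (a₁ b₁ : ℂ) (x y z : ℝ) : ℂ := (x : ℂ) + (y : ℂ) * a₁ + (z : ℂ) * b₁
/-- ξ₂ = f₂(ζ) = x + y a₂ + z b₂. -/
def xi2 (a₂ b₂ : ℂ) (x y z : ℝ) : ℂ := (x : ℂ) + (y : ℂ) * a₂ + (z : ℂ) * b₂

/-- Integer powers in ℍ(ℂ): for n < 0, qⁿ := (q⁻¹)^(-n) where q⁻¹ = Ring.inverse q. -/
def zpowQ (q : HC) (n : ℤ) : HC :=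
  if 0 ≤ n then q ^ n.toNat else (Ring.inverse q) ^ (-n).toNat

/-- A two-sided (ℤ-indexed) series ∑ f n converges unconditionally to s in the norm
of ℍ(ℂ). -/
def ZSeriesTendsto (f : ℤ → HC) (s : HC) : Prop :=
  Filter.Tendsto (fun A : Finset ℤ => hnorm ((∑ n ∈ A, f n) - s))
    Filter.atTop (nhds 0)

/-!
In the idempotent basis `e₁, e₂, e₃, e₄` every element of `E₃` is "diagonal",
`ζ - ζ₀ = (ξ₁ - ξ₁₀) e₁ + (ξ₂ - ξ₂₀) e₂`, so its integer powers are computed coordinatewise in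
`ℂ × ℂ`, and right multiplication by a diagonal element scales the `e₁, e₄` coordinates by the
first entry and the `e₂, e₃` coordinates by the second. Hence the `n`-th term of the quaternionic
series has coordinates `âₙ(ξ₁ - ξ₁₀)ⁿ, b̂ₙ(ξ₂ - ξ₂₀)ⁿ, ĉₙ(ξ₂ - ξ₂₀)ⁿ, d̂ₙ(ξ₁ - ξ₁₀)ⁿ`, and both
absolute convergence and the value of the sum reduce to the four scalar Laurent expansions, since
the norm is bounded by the sum of the moduli of the coordinates.
-/

/- Mathlib's `Quaternion` simp lemmas do not fire on the projections of `HC` (the elaborated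
instances only agree up to unfolding), so the component computations needed here are restated
definitionally. -/

@[simp] lemma hc_smul_re (s : ℂ) (q : HC) : (s • q).re = s * q.re := rfl
@[simp] lemma hc_smul_imI (s : ℂ) (q : HC) : (s • q).imI = s * q.imI := rfl
@[simp] lemma hc_smul_imJ (s : ℂ) (q : HC) : (s • q).imJ = s * q.imJ := rfl
@[simp] lemma hc_smul_imK (s : ℂ) (q : HC) : (s • q).imK = s * q.imK := rfl
@[simp] lemma hc_one_re : (1 : HC).re = 1 := rfl
@[simp] lemma hc_one_imI : (1 : HC).imI = 0 := rfl
@[simp] lemma hc_one_imJ : (1 : HC).imJ = 0 := rfl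
@[simp] lemma hc_one_imK : (1 : HC).imK = 0 := rfl
@[simp] lemma Iq_re : Iq.re = 0 := rfl
@[simp] lemma Iq_imI : Iq.imI = 1 := rfl
@[simp] lemma Iq_imJ : Iq.imJ = 0 := rfl
@[simp] lemma Iq_imK : Iq.imK = 0 := rfl
@[simp] lemma Jq_re : Jq.re = 0 := rfl
@[simp] lemma Jq_imI : Jq.imI = 0 := rfl
@[simp] lemma Jq_imJ : Jq.imJ = 1 := rfl
@[simp] lemma Jq_imK : Jq.imK = 0 := rfl
@[simp] lemma Kq_re : Kq.re = 0 := rfl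
@[simp] lemma Kq_imI : Kq.imI = 0 := rfl
@[simp] lemma Kq_imJ : Kq.imJ = 0 := rfl
@[simp] lemma Kq_imK : Kq.imK = 1 := rfl

lemma e1_add_e2 : e1 + e2 = 1 := by
  ext <;> simp [e1, e2]; ring

lemma diag_mul_diag (w₁ w₂ v₁ v₂ : ℂ) :
    (w₁ • e1 + w₂ • e2) * (v₁ • e1 + v₂ • e2) = (w₁ * v₁) • e1 + (w₂ * v₂) • e2 := by
  ext <;> simp [e1, e2] <;> ring_nf; simp [Complex.I_sq]; ring

lemma diag_pow (w₁ w₂ : ℂ) (k : ℕ) :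
    (w₁ • e1 + w₂ • e2) ^ k = (w₁ ^ k) • e1 + (w₂ ^ k) • e2 := by
  induction k with
  | zero => simp [e1_add_e2]
  | succ k ih => rw [pow_succ, ih, diag_mul_diag, ← pow_succ, ← pow_succ]

lemma ring_inverse_diag {w₁ w₂ : ℂ} (h₁ : w₁ ≠ 0) (h₂ : w₂ ≠ 0) :
    Ring.inverse (w₁ • e1 + w₂ • e2) = w₁⁻¹ • e1 + w₂⁻¹ • e2 := by
  have h : (w₁ • e1 + w₂ • e2) * (w₁⁻¹ • e1 + w₂⁻¹ • e2) = 1 := by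
    rw [diag_mul_diag, mul_inv_cancel₀ h₁, mul_inv_cancel₀ h₂, one_smul, one_smul, e1_add_e2]
  have h' : (w₁⁻¹ • e1 + w₂⁻¹ • e2) * (w₁ • e1 + w₂ • e2) = 1 := by
    rw [diag_mul_diag, inv_mul_cancel₀ h₁, inv_mul_cancel₀ h₂, one_smul, one_smul, e1_add_e2]
  exact Ring.inverse_unit ⟨_, _, h, h'⟩

lemma zpowQ_diag {w₁ w₂ : ℂ} (h₁ : w₁ ≠ 0) (h₂ : w₂ ≠ 0) (n : ℤ) :
    zpowQ (w₁ • e1 + w₂ • e2) n = (w₁ ^ n) • e1 + (w₂ ^ n) • e2 := by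
  unfold zpowQ
  split_ifs with hn
  · lift n to ℕ using hn
    simp [diag_pow]
  · obtain ⟨k, rfl⟩ : ∃ k : ℕ, n = -k := ⟨n.natAbs, by omega⟩
    simp [ring_inverse_diag h₁ h₂, diag_pow, inv_pow]

lemma basis_mul_diag (c₁ c₂ c₃ c₄ w₁ w₂ : ℂ) :
    (c₁ • e1 + c₂ • e2 + c₃ • e3 + c₄ • e4) * (w₁ • e1 + w₂ • e2)
      = (c₁ * w₁) • e1 + (c₂ * w₂) • e2 + (c₃ * w₂) • e3 + (c₄ * w₁) • e4 := by
  ext <;> simp [e1, e2, e3, e4] <;> ring_nf <;> simp [Complex.I_sq] <;> ring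

lemma coord1_basis (c₁ c₂ c₃ c₄ : ℂ) : coord1 (c₁ • e1 + c₂ • e2 + c₃ • e3 + c₄ • e4) = c₁ := by
  simp [coord1, e1, e2, e3, e4]; ring_nf; simp [Complex.I_sq]; ring

lemma coord2_basis (c₁ c₂ c₃ c₄ : ℂ) : coord2 (c₁ • e1 + c₂ • e2 + c₃ • e3 + c₄ • e4) = c₂ := by
  simp [coord2, e1, e2, e3, e4]; ring_nf; simp [Complex.I_sq]; ring

lemma coord3_basis (c₁ c₂ c₃ c₄ : ℂ) : coord3 (c₁ • e1 + c₂ • e2 + c₃ • e3 + c₄ • e4) = c₃ := by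
  simp [coord3, e1, e2, e3, e4]; ring_nf; simp [Complex.I_sq]; ring

lemma coord4_basis (c₁ c₂ c₃ c₄ : ℂ) : coord4 (c₁ • e1 + c₂ • e2 + c₃ • e3 + c₄ • e4) = c₄ := by
  simp [coord4, e1, e2, e3, e4]; ring_nf; simp [Complex.I_sq]; ring

lemma hnorm_basis_le (c₁ c₂ c₃ c₄ : ℂ) :
    hnorm (c₁ • e1 + c₂ • e2 + c₃ • e3 + c₄ • e4) ≤ ‖c₁‖ + ‖c₂‖ + ‖c₃‖ + ‖c₄‖ := by
  rw [hnorm, coord1_basis, coord2_basis, coord3_basis, coord4_basis, Real.sqrt_le_left]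
  · have := norm_nonneg c₁; have := norm_nonneg c₂
    have := norm_nonneg c₃; have := norm_nonneg c₄
    nlinarith
  · positivity

lemma zeta_sub_zeta (a₁ a₂ b₁ b₂ : ℂ) (x y z x₀ y₀ z₀ : ℝ) :
    zeta a₁ a₂ b₁ b₂ x y z - zeta a₁ a₂ b₁ b₂ x₀ y₀ z₀
      = (xi1 a₁ b₁ x y z - xi1 a₁ b₁ x₀ y₀ z₀) • e1
        + (xi2 a₂ b₂ x y z - xi2 a₂ b₂ x₀ y₀ z₀) • e2 := by
  ext <;> simp [zeta, i2, i3, xi1, xi2, e1, e2, -smul_add, -Complex.coe_smul] <;> ring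

lemma summable_hnorm_basis {ι : Type*} {u₁ u₂ u₃ u₄ : ι → ℂ} (h₁ : Summable fun n => ‖u₁ n‖)
    (h₂ : Summable fun n => ‖u₂ n‖) (h₃ : Summable fun n => ‖u₃ n‖)
    (h₄ : Summable fun n => ‖u₄ n‖) :
    Summable fun n => hnorm (u₁ n • e1 + u₂ n • e2 + u₃ n • e3 + u₄ n • e4) :=
  (((h₁.add h₂).add h₃).add h₄).of_nonneg_of_le (fun _ => Real.sqrt_nonneg _)
    fun _ => hnorm_basis_le _ _ _ _

lemma zSeriesTendsto_basis {u₁ u₂ u₃ u₄ : ℤ → ℂ} {s₁ s₂ s₃ s₄ : ℂ} (h₁ : HasSum u₁ s₁)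
    (h₂ : HasSum u₂ s₂) (h₃ : HasSum u₃ s₃) (h₄ : HasSum u₄ s₄) :
    ZSeriesTendsto (fun n => u₁ n • e1 + u₂ n • e2 + u₃ n • e3 + u₄ n • e4)
      (s₁ • e1 + s₂ • e2 + s₃ • e3 + s₄ • e4) := by
  have hpartial : ∀ A : Finset ℤ,
      (∑ n ∈ A, (u₁ n • e1 + u₂ n • e2 + u₃ n • e3 + u₄ n • e4))
          - (s₁ • e1 + s₂ • e2 + s₃ • e3 + s₄ • e4)
        = ((∑ n ∈ A, u₁ n) - s₁) • e1 + ((∑ n ∈ A, u₂ n) - s₂) • e2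
          + ((∑ n ∈ A, u₃ n) - s₃) • e3 + ((∑ n ∈ A, u₄ n) - s₄) • e4 := by
    intro A
    simp only [Finset.sum_add_distrib, ← Finset.sum_smul]
    module
  have hnorms := (((tendsto_iff_norm_sub_tendsto_zero.1 h₁).add
    (tendsto_iff_norm_sub_tendsto_zero.1 h₂)).add
    (tendsto_iff_norm_sub_tendsto_zero.1 h₃)).add (tendsto_iff_norm_sub_tendsto_zero.1 h₄)
  simp only [add_zero] at hnorms
  refine squeeze_zero (fun _ => Real.sqrt_nonneg _) (fun A => ?_) hnorms
  rw [hpartial]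
  exact hnorm_basis_le _ _ _ _

lemma ne_zero_of_lt_ofReal_norm {r : ENNReal} {w : ℂ} (h : r < ENNReal.ofReal ‖w‖) : w ≠ 0 := by
  rintro rfl
  simp at h

theorem laurent_left_general (a₁ a₂ b₁ b₂ : ℂ) (x₀ y₀ z₀ : ℝ) (r R : ENNReal)
    (F₁ F₂ F₃ F₄ : ℂ → ℂ) (a b c d : ℤ → ℂ)
    (ha : ∀ ξ : ℂ, r < ENNReal.ofReal (‖ξ - xi1 a₁ b₁ x₀ y₀ z₀‖) →
      ENNReal.ofReal (‖ξ - xi1 a₁ b₁ x₀ y₀ z₀‖) < R →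
      HasSum (fun n : ℤ => a n * (ξ - xi1 a₁ b₁ x₀ y₀ z₀) ^ n) (F₁ ξ))
    (hd : ∀ ξ : ℂ, r < ENNReal.ofReal (‖ξ - xi1 a₁ b₁ x₀ y₀ z₀‖) →
      ENNReal.ofReal (‖ξ - xi1 a₁ b₁ x₀ y₀ z₀‖) < R →
      HasSum (fun n : ℤ => d n * (ξ - xi1 a₁ b₁ x₀ y₀ z₀) ^ n) (F₄ ξ))
    (hb : ∀ ξ : ℂ, r < ENNReal.ofReal (‖ξ - xi2 a₂ b₂ x₀ y₀ z₀‖) →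
      ENNReal.ofReal (‖ξ - xi2 a₂ b₂ x₀ y₀ z₀‖) < R →
      HasSum (fun n : ℤ => b n * (ξ - xi2 a₂ b₂ x₀ y₀ z₀) ^ n) (F₂ ξ))
    (hc : ∀ ξ : ℂ, r < ENNReal.ofReal (‖ξ - xi2 a₂ b₂ x₀ y₀ z₀‖) →
      ENNReal.ofReal (‖ξ - xi2 a₂ b₂ x₀ y₀ z₀‖) < R →
      HasSum (fun n : ℤ => c n * (ξ - xi2 a₂ b₂ x₀ y₀ z₀) ^ n) (F₃ ξ))
    (x y z : ℝ)
    (h₁l : r < ENNReal.ofReal (‖xi1 a₁ b₁ x y z - xi1 a₁ b₁ x₀ y₀ z₀‖))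
    (h₁r : ENNReal.ofReal (‖xi1 a₁ b₁ x y z - xi1 a₁ b₁ x₀ y₀ z₀‖) < R)
    (h₂l : r < ENNReal.ofReal (‖xi2 a₂ b₂ x y z - xi2 a₂ b₂ x₀ y₀ z₀‖))
    (h₂r : ENNReal.ofReal (‖xi2 a₂ b₂ x y z - xi2 a₂ b₂ x₀ y₀ z₀‖) < R) :
    Summable (fun n : ℤ =>
      hnorm ((a n • e1 + b n • e2 + c n • e3 + d n • e4) *
        zpowQ (zeta a₁ a₂ b₁ b₂ x y z - zeta a₁ a₂ b₁ b₂ x₀ y₀ z₀) n)) ∧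
    ZSeriesTendsto (fun n : ℤ =>
      (a n • e1 + b n • e2 + c n • e3 + d n • e4) *
        zpowQ (zeta a₁ a₂ b₁ b₂ x y z - zeta a₁ a₂ b₁ b₂ x₀ y₀ z₀) n)
      (F₁ (xi1 a₁ b₁ x y z) • e1 + F₂ (xi2 a₂ b₂ x y z) • e2 +
       F₃ (xi2 a₂ b₂ x y z) • e3 + F₄ (xi1 a₁ b₁ x y z) • e4) := by
  have hw₁ := ne_zero_of_lt_ofReal_norm h₁l
  have hw₂ := ne_zero_of_lt_ofReal_norm h₂l
  simp only [zeta_sub_zeta, zpowQ_diag hw₁ hw₂, basis_mul_diag]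
  exact ⟨summable_hnorm_basis (ha _ h₁l h₁r).summable.norm (hb _ h₂l h₂r).summable.norm
      (hc _ h₂l h₂r).summable.norm (hd _ h₁l h₁r).summable.norm,
    zSeriesTendsto_basis (ha _ h₁l h₁r) (hb _ h₂l h₂r) (hc _ h₂l h₂r) (hd _ h₁l h₁r)⟩

/-- Laurent expansion, left version: if F̂₁, F̂₄ are holomorphic on the
annulus {r < |ξ - ξ₁₀| < R} with Laurent coefficients âₙ, d̂ₙ, and F̂₂, F̂₃ on
{r < |ξ - ξ₂₀| < R} with Laurent coefficients b̂ₙ, ĉₙ, and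
Φ̂(ζ) = F̂₁(ξ₁)e₁ + F̂₂(ξ₂)e₂ + F̂₃(ξ₂)e₃ + F̂₄(ξ₁)e₄ on K_ζ, then for every ζ ∈ K_ζ the
series ∑_{n∈ℤ} p̂ₙ(ζ-ζ₀)ⁿ, p̂ₙ = âₙe₁ + b̂ₙe₂ + ĉₙe₃ + d̂ₙe₄, converges absolutely in
the norm of ℍ(ℂ) to Φ̂(ζ). -/
theorem laurent_left (a₁ a₂ b₁ b₂ : ℂ) (x₀ y₀ z₀ : ℝ) (r R : ENNReal) (hrR : r < R)
    (F₁ F₂ F₃ F₄ : ℂ → ℂ) (a b c d : ℤ → ℂ)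
    (hF₁ : DifferentiableOn ℂ F₁
      {ξ : ℂ | r < ENNReal.ofReal (‖ξ - xi1 a₁ b₁ x₀ y₀ z₀‖) ∧
        ENNReal.ofReal (‖ξ - xi1 a₁ b₁ x₀ y₀ z₀‖) < R})
    (hF₄ : DifferentiableOn ℂ F₄
      {ξ : ℂ | r < ENNReal.ofReal (‖ξ - xi1 a₁ b₁ x₀ y₀ z₀‖) ∧
        ENNReal.ofReal (‖ξ - xi1 a₁ b₁ x₀ y₀ z₀‖) < R})
    (hF₂ : DifferentiableOn ℂ F₂
      {ξ : ℂ | r < ENNReal.ofReal (‖ξ - xi2 a₂ b₂ x₀ y₀ z₀‖) ∧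
        ENNReal.ofReal (‖ξ - xi2 a₂ b₂ x₀ y₀ z₀‖) < R})
    (hF₃ : DifferentiableOn ℂ F₃
      {ξ : ℂ | r < ENNReal.ofReal (‖ξ - xi2 a₂ b₂ x₀ y₀ z₀‖) ∧
        ENNReal.ofReal (‖ξ - xi2 a₂ b₂ x₀ y₀ z₀‖) < R})
    (ha : ∀ ξ : ℂ, r < ENNReal.ofReal (‖ξ - xi1 a₁ b₁ x₀ y₀ z₀‖) →
      ENNReal.ofReal (‖ξ - xi1 a₁ b₁ x₀ y₀ z₀‖) < R →
      HasSum (fun n : ℤ => a n * (ξ - xi1 a₁ b₁ x₀ y₀ z₀) ^ n) (F₁ ξ))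
    (hd : ∀ ξ : ℂ, r < ENNReal.ofReal (‖ξ - xi1 a₁ b₁ x₀ y₀ z₀‖) →
      ENNReal.ofReal (‖ξ - xi1 a₁ b₁ x₀ y₀ z₀‖) < R →
      HasSum (fun n : ℤ => d n * (ξ - xi1 a₁ b₁ x₀ y₀ z₀) ^ n) (F₄ ξ))
    (hb : ∀ ξ : ℂ, r < ENNReal.ofReal (‖ξ - xi2 a₂ b₂ x₀ y₀ z₀‖) →
      ENNReal.ofReal (‖ξ - xi2 a₂ b₂ x₀ y₀ z₀‖) < R →
      HasSum (fun n : ℤ => b n * (ξ - xi2 a₂ b₂ x₀ y₀ z₀) ^ n) (F₂ ξ))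
    (hc : ∀ ξ : ℂ, r < ENNReal.ofReal (‖ξ - xi2 a₂ b₂ x₀ y₀ z₀‖) →
      ENNReal.ofReal (‖ξ - xi2 a₂ b₂ x₀ y₀ z₀‖) < R →
      HasSum (fun n : ℤ => c n * (ξ - xi2 a₂ b₂ x₀ y₀ z₀) ^ n) (F₃ ξ))
    (x y z : ℝ)
    (h₁l : r < ENNReal.ofReal (‖xi1 a₁ b₁ x y z - xi1 a₁ b₁ x₀ y₀ z₀‖))
    (h₁r : ENNReal.ofReal (‖xi1 a₁ b₁ x y z - xi1 a₁ b₁ x₀ y₀ z₀‖) < R)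
    (h₂l : r < ENNReal.ofReal (‖xi2 a₂ b₂ x y z - xi2 a₂ b₂ x₀ y₀ z₀‖))
    (h₂r : ENNReal.ofReal (‖xi2 a₂ b₂ x y z - xi2 a₂ b₂ x₀ y₀ z₀‖) < R) :
    Summable (fun n : ℤ =>
      hnorm ((a n • e1 + b n • e2 + c n • e3 + d n • e4) *
        zpowQ (zeta a₁ a₂ b₁ b₂ x y z - zeta a₁ a₂ b₁ b₂ x₀ y₀ z₀) n)) ∧
    ZSeriesTendsto (fun n : ℤ =>
      (a n • e1 + b n • e2 + c n • e3 + d n • e4) *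
        zpowQ (zeta a₁ a₂ b₁ b₂ x y z - zeta a₁ a₂ b₁ b₂ x₀ y₀ z₀) n)
      (F₁ (xi1 a₁ b₁ x y z) • e1 + F₂ (xi2 a₂ b₂ x y z) • e2 +
       F₃ (xi2 a₂ b₂ x y z) • e3 + F₄ (xi1 a₁ b₁ x y z) • e4) :=
  laurent_left_general a₁ a₂ b₁ b₂ x₀ y₀ z₀ r R F₁ F₂ F₃ F₄ a b c d ha hd hb hc x y z h₁l h₁r h₂l
    h₂r
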